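/- arXiv:1907.08755 — 4 statements merged into one kernel-verified Lean document; each statement's English description precedes it below -/
import Mathlib

section
/- Let f : X → X be a continuous map on a compact metric space X. Every omega-limit set ω_f(x) is internally chain transitive: for any a, b ∈ ω_f(x) and any ε > 0 there is an ε-chain from a to b contained entirely in ω_f(x). -/
open MeasureTheory Filter Topology Set
open scoped ENNReal NNReal

variable {X : Type*} [MetricSpace X] [CompactSpace X] [MeasurableSpace X] [BorelSpace X]

/-- The empirical (time-average) measure `Υ_{n+1}(x) = (1/(n+1)) ∑_{j=0}^{n} δ_{f^j x}`. -/
noncomputable def empMeas (f : X → X) (x : X) (n : ℕ) : Measure X :=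
  ((n + 1 : ℝ≥0∞))⁻¹ • ∑ j ∈ Finset.range (n + 1), Measure.dirac (f^[j] x)

instance empMeas_prob (f : X → X) (x : X) (n : ℕ) : IsProbabilityMeasure (empMeas f x n) := by
  constructor
  simp only [empMeas, Measure.smul_apply, Measure.coe_finset_sum, Finset.sum_apply,
    MeasureTheory.measure_univ, Finset.sum_const, Finset.card_range, nsmul_eq_mul, mul_one,
    smul_eq_mul]
  rw [show ((n : ℝ≥0∞) + 1) = ((n + 1 : ℕ) : ℝ≥0∞) by push_cast; ring,
    ENNReal.inv_mul_cancel] <;> simp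

/-- The empirical measure as a probability measure. -/
noncomputable def empP (f : X → X) (x : X) (n : ℕ) : ProbabilityMeasure X :=
  ⟨empMeas f x n, empMeas_prob f x n⟩

/-- The p-omega-limit set: all weak* limits of subsequences of the empirical measures. -/
def pOmega (f : X → X) (x : X) : Set (ProbabilityMeasure X) :=
  {μ | ∃ φ : ℕ → ℕ, StrictMono φ ∧ Tendsto (fun i => empP f x (φ i)) atTop (𝓝 μ)}

/-- The omega-limit set of a point. -/
def omegaSet (f : X → X) (x : X) : Set X :=
  ⋂ N : ℕ, closure {y | ∃ n ≥ N, f^[n] x = y}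

/-- An invariant probability measure. -/
def InvMeas (f : X → X) (μ : ProbabilityMeasure X) : Prop :=
  ∀ A : Set X, MeasurableSet A → μ.toMeasure (f ⁻¹' A) = μ.toMeasure A

/-- `μ` is physical-like (SRB-like / observable) w.r.t. the reference measure `Leb`:
every weak* neighborhood basin has positive reference measure. -/
def PhysicalLike (f : X → X) (Leb : Measure X) (μ : ProbabilityMeasure X) : Prop :=
  ∀ U ∈ 𝓝 μ, 0 < Leb {x | ∃ ν ∈ pOmega f x, ν ∈ U}

/-- An ε-chain from `a` to `b` with all points inside `A`. -/
def IsEpsChain (f : X → X) (ε : ℝ) (A : Set X) (a b : X) : Prop :=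
  ∃ n : ℕ, 0 < n ∧ ∃ c : ℕ → X, c 0 = a ∧ c n = b ∧ (∀ i ≤ n, c i ∈ A) ∧
    ∀ i < n, dist (f (c i)) (c (i + 1)) < ε

/-- A nonempty compact invariant internally chain transitive set. -/
def InternallyChainTransitive (f : X → X) (A : Set X) : Prop :=
  A.Nonempty ∧ IsCompact A ∧ f '' A ⊆ A ∧ ∀ a ∈ A, ∀ b ∈ A, ∀ ε > 0, IsEpsChain f ε A a b

/-- Periodic shadowing property. -/
def PeriodicShadowing (f : X → X) : Prop :=
  ∀ ε > 0, ∃ δ > 0, ∀ (x : ℕ → X) (T : ℕ), 0 < T →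
    (∀ i, dist (f (x i)) (x (i + 1)) < δ) → (∀ i, x (i + T) = x i) →
    ∃ y : X, (∃ p : ℕ, 0 < p ∧ f^[p] y = y) ∧ ∀ n, dist (f^[n] y) (x n) < ε

/-- The periodic gluing orbit property of `Λ`. -/
def PeriodicGluing (f : X → X) (Λ : Set X) : Prop :=
  ∀ ε > 0, ∃ M : ℕ, ∀ k : ℕ, 0 < k → ∀ (xs : ℕ → X) (ns : ℕ → ℕ),
    (∀ i < k, xs i ∈ Λ) → (∀ i < k, 1 ≤ ns i) →
    ∃ ms : ℕ → ℕ, (∀ i < k, ms i ≤ M) ∧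
      ∃ z : X, f^[∑ j ∈ Finset.range k, (ns j + ms j)] z = z ∧
        ∀ i < k, ∀ l < ns i,
          dist (f^[(∑ j ∈ Finset.range i, (ns j + ms j)) + l] z) (f^[l] (xs i)) < ε

/-- The set of periodic measures (uniform measures on periodic orbits). -/
def periodicMeasures (f : X → X) : Set (ProbabilityMeasure X) :=
  {μ | ∃ z : X, ∃ m : ℕ, f^[m + 1] z = z ∧ μ = empP f z m}

/-- The topological support of a measure. -/
def mSupport (μ : Measure X) : Set X := {y | ∀ U ∈ 𝓝 y, 0 < μ U}

open scoped omegaLimit in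
lemma omegaSet_eq_omegaLimit (f : X → X) (x : X) :
    omegaSet f x = ω⁺ (fun n x' => f^[n] x') {x} := by
  apply subset_antisymm
  · intro y hy
    simp only [omegaLimit_def, mem_iInter]
    intro u hu
    obtain ⟨N, hN⟩ := mem_atTop_sets.mp hu
    have hyN : y ∈ closure {y | ∃ n ≥ N, f^[n] x = y} := mem_iInter.mp hy N
    refine closure_mono ?_ hyN
    rintro z ⟨n, hn, rfl⟩
    exact ⟨n, hN n hn, x, rfl, rfl⟩
  · intro y hy
    rw [omegaSet, mem_iInter]
    intro N
    have := mem_iInter.mp (mem_iInter.mp hy (Set.Ici N)) (Ici_mem_atTop N)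
    refine closure_mono ?_ this
    rintro z ⟨n, hn, x', hx', rfl⟩
    rcases hx' with rfl
    exact ⟨n, hn, rfl⟩

lemma omegaSet_attract (f : X → X) (x : X) {δ : ℝ} (hδ : 0 < δ) :
    ∃ N : ℕ, ∀ n ≥ N, ∃ c ∈ omegaSet f x, dist (f^[n] x) c < δ := by
  have hsub : omegaSet f x ⊆ Metric.thickening δ (omegaSet f x) :=
    Metric.self_subset_thickening hδ _
  rw [omegaSet_eq_omegaLimit] at hsub
  have := eventually_mapsTo_of_isOpen_of_omegaLimit_subset (Filter.atTop)
    (fun n x' => f^[n] x') {x} (Metric.isOpen_thickening) hsub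
  obtain ⟨N, hN⟩ := eventually_atTop.mp this
  refine ⟨N, fun n hn => ?_⟩
  have : f^[n] x ∈ Metric.thickening δ (omegaSet f x) := by
    rw [omegaSet_eq_omegaLimit]
    exact hN n hn rfl
  rwa [Metric.mem_thickening_iff] at this

lemma omegaSet_frequent {f : X → X} {x a : X} (ha : a ∈ omegaSet f x) {δ : ℝ} (hδ : 0 < δ)
    (N : ℕ) : ∃ n ≥ N, dist (f^[n] x) a < δ := by
  have haN : a ∈ closure {y | ∃ n ≥ N, f^[n] x = y} := mem_iInter.mp ha N
  obtain ⟨b, ⟨n, hn, rfl⟩, hb⟩ := Metric.mem_closure_iff.mp haN δ hδ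
  exact ⟨n, hn, by rwa [dist_comm] at hb⟩

/-- Every omega-limit set is internally chain transitive. -/
theorem omegaSet_internallyChainTransitive (f : X → X) (hf : Continuous f) (x : X) :
    InternallyChainTransitive f (omegaSet f x) := by
  set A := omegaSet f x with hA
  have hclosed : IsClosed A := isClosed_iInter fun N => isClosed_closure
  have hne : A.Nonempty := by
    rw [hA, omegaSet_eq_omegaLimit]
    exact nonempty_omegaLimit _ _ _ (singleton_nonempty x)
  have hinv : f '' A ⊆ A := by
    rintro _ ⟨y, hy, rfl⟩
    rw [hA, omegaSet, mem_iInter]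
    intro N
    have hyN : y ∈ closure {y | ∃ n ≥ N, f^[n] x = y} := mem_iInter.mp hy N
    have h1 : f y ∈ closure (f '' {y | ∃ n ≥ N, f^[n] x = y}) :=
      image_closure_subset_closure_image hf ⟨y, hyN, rfl⟩
    refine closure_mono ?_ h1
    rintro _ ⟨z, ⟨n, hn, rfl⟩, rfl⟩
    exact ⟨n + 1, le_trans hn (Nat.le_succ n), Function.iterate_succ_apply' f n x⟩
  refine ⟨hne, hclosed.isCompact, hinv, ?_⟩
  intro a ha b hb ε hε
  -- uniform continuity
  obtain ⟨δ₀, hδ₀, hδ₀f⟩ := Metric.uniformContinuous_iff.mp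
    (CompactSpace.uniformContinuous_of_continuous hf) (ε / 2) (by linarith)
  set δ : ℝ := min δ₀ (ε / 2) with hδdef
  have hδ : 0 < δ := lt_min hδ₀ (by linarith)
  obtain ⟨N, hN⟩ := omegaSet_attract f x hδ
  obtain ⟨n₁, hn₁N, hn₁⟩ := omegaSet_frequent ha hδ N
  obtain ⟨n₂, hn₂N, hn₂⟩ := omegaSet_frequent hb hδ (n₁ + 1)
  set n : ℕ := n₂ - n₁ with hndef
  have hn12 : n₁ + 1 ≤ n₂ := hn₂N
  have hnpos : 0 < n := by omega
  have hsum : n₁ + n = n₂ := by omega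
  classical
  set p : ℕ → X := fun k => if h : ∃ c ∈ A, dist (f^[k] x) c < δ then h.choose else a with hp
  set c : ℕ → X := fun i => if i = 0 then a else if n ≤ i then b else p (n₁ + i) with hc
  have key : ∀ i ≤ n, c i ∈ A ∧ dist (f^[n₁ + i] x) (c i) < δ := by
    intro i hi
    rcases Nat.eq_zero_or_pos i with rfl | hipos
    · simpa [hc] using ⟨ha, hn₁⟩
    rcases eq_or_lt_of_le hi with heq | hilt
    · have hceq : c i = b := by simp [hc, Nat.pos_iff_ne_zero.mp hipos, heq.ge]
      have hidx : n₁ + i = n₂ := by omega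
      rw [hceq, hidx]
      exact ⟨hb, hn₂⟩
    · have hcp : c i = p (n₁ + i) := by
        simp [hc, Nat.pos_iff_ne_zero.mp hipos, not_le.mpr hilt]
      have hex : ∃ c ∈ A, dist (f^[n₁ + i] x) c < δ := hN (n₁ + i) (by omega)
      rw [hcp, hp]
      simp only [dif_pos hex]
      exact hex.choose_spec
  refine ⟨n, hnpos, c, by simp [hc], ?_, fun i hi => (key i hi).1, ?_⟩
  · simp [hc, Nat.pos_iff_ne_zero.mp hnpos]
  · intro i hi
    have h1 := (key i (le_of_lt hi)).2
    have h2 := (key (i + 1) hi).2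
    have hfc : dist (f (c i)) (f (f^[n₁ + i] x)) < ε / 2 := by
      apply hδ₀f
      rw [dist_comm]
      exact lt_of_lt_of_le h1 (min_le_left _ _)
    have heq : f (f^[n₁ + i] x) = f^[n₁ + (i + 1)] x := by
      rw [show n₁ + (i + 1) = (n₁ + i) + 1 by omega, Function.iterate_succ_apply']
    calc dist (f (c i)) (c (i + 1))
        ≤ dist (f (c i)) (f (f^[n₁ + i] x)) + dist (f (f^[n₁ + i] x)) (c (i + 1)) :=
          dist_triangle _ _ _
      _ < ε / 2 + δ := by rw [heq] at hfc ⊢; exact add_lt_add hfc h2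
      _ ≤ ε / 2 + ε / 2 := by have := min_le_right δ₀ (ε / 2); linarith
      _ = ε := by ring
end

section
/- Let f : M → M be a continuous map on a compact metric space M equipped with a Borel probability measure Leb of full support. Then every physical-like (SRB-like) measure μ is supported on the Hausdorff-metric closure of the family of omega-limit sets: there exists a closed set Λ that is a Hausdorff limit of omega-limit sets ω_f(x_n) with μ(Λ) = 1. -/
/-! Pick points `x k` whose basins witness `p ω`-limit measures `ν k → μ`.  Each `ν k` is a limit of
empirical measures of `x k`, and these give vanishing mass to every open set the orbit eventually
leaves, so `ν k` is carried by `ω(x k)`.  By compactness of the hyperspace of nonempty compact sets,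
a subsequence of the `ω(x k)` converges in the Hausdorff metric to some `Λ`; by the portmanteau
theorem `μ` gives full mass to every closed `ε`-neighbourhood of `Λ`, hence to `Λ`. -/

open MeasureTheory Filter Topology Set
open scoped ENNReal NNReal

variable {X : Type*} [MetricSpace X] [CompactSpace X] [MeasurableSpace X] [BorelSpace X]

open TopologicalSpace

namespace MeasureTheory.ProbabilityMeasure

variable {Y ι : Type*} [MetricSpace Y] [MeasurableSpace Y] [OpensMeasurableSpace Y]
  {l : Filter ι} [l.NeBot] {μ : ProbabilityMeasure Y} {ν : ι → ProbabilityMeasure Y}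

theorem measure_eq_one_of_tendsto_of_eventually_eq_one (hν : Tendsto ν l (𝓝 μ)) {F : Set Y}
    (hF : IsClosed F) (h : ∀ᶠ i in l, (ν i : Measure Y) F = 1) : (μ : Measure Y) F = 1 := by
  refine le_antisymm prob_le_one ?_
  calc (1 : ℝ≥0∞) = l.limsup fun i ↦ (ν i : Measure Y) F := by rw [limsup_congr h, limsup_const]
    _ ≤ (μ : Measure Y) F := limsup_measure_closed_le_of_tendsto hν hF

theorem measure_eq_one_of_forall_cthickening_eq_one {s : Set Y} (hs : IsClosed s)
    (h : ∀ ε > 0, (μ : Measure Y) (Metric.cthickening ε s) = 1) : (μ : Measure Y) s = 1 :=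
  tendsto_nhds_unique
    ((tendsto_measure_cthickening_of_isClosed ⟨1, one_pos, measure_ne_top _ _⟩ hs).mono_left
      (nhdsWithin_le_nhds (s := Ioi 0)))
    ((tendsto_const_nhds (x := (1 : ℝ≥0∞))).congr'
      (eventually_nhdsWithin_of_forall fun ε hε ↦ (h ε hε).symm))

theorem measure_eq_one_of_tendsto_of_tendsto_nonemptyCompacts (hν : Tendsto ν l (𝓝 μ))
    {K : ι → NonemptyCompacts Y} {L : NonemptyCompacts Y} (hK : Tendsto K l (𝓝 L))
    (hνK : ∀ i, (ν i : Measure Y) (K i) = 1) : (μ : Measure Y) L = 1 := by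
  refine measure_eq_one_of_forall_cthickening_eq_one L.isCompact.isClosed fun ε hε ↦ ?_
  refine measure_eq_one_of_tendsto_of_eventually_eq_one hν Metric.isClosed_cthickening ?_
  filter_upwards [(tendsto_iff_dist_tendsto_zero.mp hK).eventually (gt_mem_nhds hε)] with i hi
  have hsub : (K i : Set Y) ⊆ Metric.cthickening ε L := fun y hy ↦ by
    obtain ⟨z, hz, hyz⟩ := Metric.exists_dist_lt_of_hausdorffDist_lt hy hi
      (Metric.hausdorffEDist_ne_top_of_nonempty_of_bounded (K i).nonempty L.nonempty
        (K i).isCompact.isBounded L.isCompact.isBounded)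
    exact Metric.mem_cthickening_of_dist_le y z ε _ hz hyz.le
  exact le_antisymm prob_le_one ((hνK i).symm.le.trans (measure_mono hsub))

end MeasureTheory.ProbabilityMeasure

section OmegaSet

variable {Z : Type*} [MetricSpace Z]

theorem isClosed_omegaSet (f : Z → Z) (x : Z) : IsClosed (omegaSet f x) :=
  isClosed_iInter fun _ ↦ isClosed_closure

theorem omegaSet_nonempty [CompactSpace Z] (f : Z → Z) (x : Z) : (omegaSet f x).Nonempty :=
  IsCompact.nonempty_iInter_of_sequence_nonempty_isCompact_isClosed _
    (fun _ ↦ closure_mono fun _ ⟨n, hn, hy⟩ ↦ ⟨n, by omega, hy⟩)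
    (fun N ↦ ⟨f^[N] x, subset_closure ⟨N, le_rfl, rfl⟩⟩) isClosed_closure.isCompact
    fun _ ↦ isClosed_closure

def omegaCompacts [CompactSpace Z] (f : Z → Z) (x : Z) : NonemptyCompacts Z :=
  ⟨⟨omegaSet f x, (isClosed_omegaSet f x).isCompact⟩, omegaSet_nonempty f x⟩

end OmegaSet

theorem empMeas_le_of_iterate_notMem {Z : Type*} [MeasurableSpace Z] (f : Z → Z) (x : Z)
    {U : Set Z} (hU : MeasurableSet U) {N : ℕ} (h : ∀ j ≥ N, f^[j] x ∉ U) (n : ℕ) :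
    empMeas f x n U ≤ N / (n + 1) := by
  have hsum : ∑ j ∈ Finset.range (n + 1), Measure.dirac (f^[j] x) U ≤ N :=
    calc ∑ j ∈ Finset.range (n + 1), Measure.dirac (f^[j] x) U
        ≤ ∑ j ∈ Finset.range (n + 1), if j < N then (1 : ℝ≥0∞) else 0 := by
          refine Finset.sum_le_sum fun j _ ↦ ?_
          split_ifs with hj
          · exact prob_le_one
          · rw [Measure.dirac_apply' _ hU, indicator_of_notMem (h j (not_lt.mp hj))]
      _ = ((Finset.range (n + 1)).filter (· < N)).card := Finset.sum_boole _ _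
      _ ≤ N := by
          exact_mod_cast (Finset.card_le_card fun j hj ↦ Finset.mem_range.2
            (Finset.mem_filter.1 hj).2).trans (Finset.card_range N).le
  rw [empMeas, Measure.smul_apply, Measure.coe_finsetSum, Finset.sum_apply, smul_eq_mul,
    ENNReal.div_eq_inv_mul]
  gcongr

section PhysicalLike

variable {Z : Type*} [MetricSpace Z] [MeasurableSpace Z] [BorelSpace Z] {f : Z → Z}

theorem measure_eq_zero_of_mem_pOmega {x : Z} {ν : ProbabilityMeasure Z} (hν : ν ∈ pOmega f x)
    {U : Set Z} (hU : IsOpen U) {N : ℕ} (h : ∀ j ≥ N, f^[j] x ∉ U) : (ν : Measure Z) U = 0 := by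
  obtain ⟨φ, hφ, htend⟩ := hν
  have hsmall : Tendsto (fun i ↦ (N : ℝ≥0∞) / (φ i + 1)) atTop (𝓝 0) := by
    have := ENNReal.Tendsto.const_mul (ENNReal.tendsto_inv_nat_nhds_zero.comp
      ((tendsto_add_atTop_nat 1).comp hφ.tendsto_atTop)) (.inr (ENNReal.natCast_ne_top N))
    simpa [div_eq_mul_inv] using this
  have hU0 : Tendsto (fun i ↦ (empP f x (φ i) : Measure Z) U) atTop (𝓝 0) :=
    tendsto_of_tendsto_of_tendsto_of_le_of_le tendsto_const_nhds hsmall (fun _ ↦ zero_le)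
      fun i ↦ empMeas_le_of_iterate_notMem f x hU.measurableSet h (φ i)
  exact le_antisymm
    (hU0.liminf_eq ▸ ProbabilityMeasure.le_liminf_measure_open_of_tendsto htend hU) zero_le

theorem measure_omegaSet_eq_one_of_mem_pOmega {x : Z} {ν : ProbabilityMeasure Z}
    (hν : ν ∈ pOmega f x) : (ν : Measure Z) (omegaSet f x) = 1 := by
  rw [← prob_compl_eq_zero_iff (isClosed_omegaSet f x).measurableSet, omegaSet, compl_iInter]
  exact measure_iUnion_null fun N ↦ measure_eq_zero_of_mem_pOmega hν isClosed_closure.isOpen_compl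
    fun j hj hmem ↦ hmem (subset_closure ⟨j, hj, rfl⟩)

theorem PhysicalLike.exists_seq_mem_pOmega_tendsto [SeparableSpace Z] {Leb : Measure Z}
    {μ : ProbabilityMeasure Z} (hμ : PhysicalLike f Leb μ) :
    ∃ (x : ℕ → Z) (ν : ℕ → ProbabilityMeasure Z), (∀ k, ν k ∈ pOmega f (x k)) ∧
      Tendsto ν atTop (𝓝 μ) := by
  obtain ⟨B, hB⟩ := (𝓝 μ).exists_antitone_basis
  have hbasin (k : ℕ) : ∃ x, ∃ ν ∈ pOmega f x, ν ∈ B k :=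
    nonempty_of_measure_ne_zero (hμ (B k) (hB.mem k)).ne'
  choose x ν hνp hνB using hbasin
  exact ⟨x, ν, hνp, hB.tendsto hνB⟩

end PhysicalLike

theorem physicalLike_supported_on_hausdorff_limit_of_omegaSets_general
    (f : X → X) (Leb : Measure X)
    (μ : ProbabilityMeasure X) (hμ : PhysicalLike f Leb μ) :
    ∃ Λ : Set X, IsClosed Λ ∧
      (∃ xs : ℕ → X,
        Tendsto (fun n => Metric.hausdorffDist (omegaSet f (xs n)) Λ) atTop (𝓝 0)) ∧
      μ.toMeasure Λ = 1 := by
  obtain ⟨x, ν, hνx, hν⟩ := hμ.exists_seq_mem_pOmega_tendsto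
  obtain ⟨L, ψ, hψ, hL⟩ := CompactSpace.tendsto_subseq (omegaCompacts f ∘ x)
  refine ⟨L, L.isCompact.isClosed, ⟨x ∘ ψ, tendsto_iff_dist_tendsto_zero.mp hL⟩, ?_⟩
  exact ProbabilityMeasure.measure_eq_one_of_tendsto_of_tendsto_nonemptyCompacts
    (hν.comp hψ.tendsto_atTop) hL fun n ↦ measure_omegaSet_eq_one_of_mem_pOmega (hνx (ψ n))

/-- Every physical-like measure gives full measure to a Hausdorff limit of
omega-limit sets. -/
theorem physicalLike_supported_on_hausdorff_limit_of_omegaSets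
    (f : X → X) (hf : Continuous f) (Leb : Measure X) [IsProbabilityMeasure Leb]
    (hsupp : ∀ U : Set X, IsOpen U → U.Nonempty → 0 < Leb U)
    (μ : ProbabilityMeasure X) (hμ : PhysicalLike f Leb μ) :
    ∃ Λ : Set X, IsClosed Λ ∧
      (∃ xs : ℕ → X,
        Tendsto (fun n => Metric.hausdorffDist (omegaSet f (xs n)) Λ) atTop (𝓝 0)) ∧
      μ.toMeasure Λ = 1 :=
  physicalLike_supported_on_hausdorff_limit_of_omegaSets_general f Leb μ hμ
end

section
/- Let f : M → M be a continuous map on a compact metric space M with a fully supported reference Borel probability measure Leb. If f has the periodic shadowing property, then every physical-like measure is a weak* limit of periodic measures: O_f ⊆ closure(P_p(f)). -/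
open MeasureTheory Filter Topology Set BoundedContinuousFunction
open scoped ENNReal NNReal

variable {X : Type*} [MetricSpace X] [CompactSpace X] [MeasurableSpace X] [BorelSpace X]

private lemma sum_range_add' (w : ℕ → ℝ) (a b : ℕ) :
    ∑ k ∈ Finset.range (a + b), w k
      = (∑ k ∈ Finset.range a, w k) + ∑ k ∈ Finset.range b, w (a + k) := by
  induction b with
  | zero => simp
  | succ n ih =>
      rw [← Nat.add_assoc, Finset.sum_range_succ, ih, Finset.sum_range_succ, add_assoc]

private lemma shift_periodic' (u : ℕ → ℝ) (p : ℕ) (hu : ∀ k, u (k + p) = u k) (n k : ℕ) :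
    u (n * p + k) = u k := by
  induction n with
  | zero => simp
  | succ m ihm =>
      have h2 : (m + 1) * p + k = (m * p + k) + p := by ring
      rw [h2, hu, ihm]

private lemma sum_periodic' (u : ℕ → ℝ) (p : ℕ) (hu : ∀ k, u (k + p) = u k) (q : ℕ) :
    ∑ k ∈ Finset.range (q * p), u k = (q : ℝ) * ∑ k ∈ Finset.range p, u k := by
  induction q with
  | zero => simp
  | succ n ih =>
      have hsh : ∀ k, u (n * p + k) = u k := shift_periodic' u p hu n
      rw [Nat.succ_mul, sum_range_add', ih]
      have : ∑ k ∈ Finset.range p, u (n * p + k) = ∑ k ∈ Finset.range p, u k :=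
        Finset.sum_congr rfl fun k _ => hsh k
      rw [this]
      push_cast
      ring

private lemma integral_empP (f : X → X) (x : X) (n : ℕ) (g : X →ᵇ ℝ) :
    ∫ a, g a ∂(empP f x n : Measure X)
      = (∑ k ∈ Finset.range (n + 1), g (f^[k] x)) / ((n + 1 : ℕ) : ℝ) := by
  have hint : ∀ j ∈ Finset.range (n + 1), Integrable g (Measure.dirac (f^[j] x)) :=
    fun j _ => g.integrable _
  show ∫ a, g a ∂(empMeas f x n) = _
  rw [empMeas, integral_smul_measure, integral_finset_sum_measure hint]
  have hd : ∀ j, ∫ a, g a ∂(Measure.dirac (f^[j] x)) = g (f^[j] x) := fun j =>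
    integral_dirac' _ _ g.continuous.stronglyMeasurable
  simp only [hd]
  rw [show ((n : ℝ≥0∞) + 1) = ((n + 1 : ℕ) : ℝ≥0∞) by push_cast; ring,
    ENNReal.toReal_inv, ENNReal.toReal_natCast, smul_eq_mul, inv_mul_eq_div]

private lemma pOmega_mem_closure (f : X → X) (hps : PeriodicShadowing f)
    (x₀ : X) (ν : ProbabilityMeasure X) (hν : ν ∈ pOmega f x₀) :
    ν ∈ closure (periodicMeasures f) := by
  obtain ⟨φ, hφ, hconv⟩ := hν
  -- a limit point of the orbit along the times φ i + 1
  obtain ⟨a, -, ψ, hψ, hua⟩ :=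
    isCompact_univ.tendsto_subseq (x := fun i => f^[φ i + 1] x₀) (fun i => mem_univ _)
  have hrmono : StrictMono fun j => φ (ψ j) + 1 := fun i j hij => by
    simpa using (hφ (hψ hij))
  have hrge : ∀ j, j ≤ φ (ψ j) + 1 := fun j => hrmono.le_apply
  -- key construction: periodic shadowing of a closed-up orbit segment
  have key : ∀ m : ℕ, ∃ (y : X) (p s T jj : ℕ),
      0 < p ∧ 0 < T ∧ f^[p] y = y ∧ m ≤ jj ∧ s + T = φ (ψ jj) + 1 ∧ (m + 1) * s ≤ T ∧
      ∀ n, dist (f^[n] y) (f^[s + n % T] x₀) < 1 / ((m : ℝ) + 1) := by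
    intro m
    have hεm : (0 : ℝ) < 1 / ((m : ℝ) + 1) := by positivity
    obtain ⟨δ, hδ, hshad⟩ := hps _ hεm
    have hball : ∀ᶠ j in atTop, dist (f^[φ (ψ j) + 1] x₀) a < δ / 2 := by
      have := hua.eventually (Metric.ball_mem_nhds a (half_pos hδ))
      simpa [Function.comp, Metric.mem_ball] using this
    obtain ⟨J, hJ⟩ := eventually_atTop.mp hball
    set s := φ (ψ J) + 1 with hs
    set jj := max (max (J + 1) m) ((m + 2) * s) with hjj
    have hJjj : J < jj := lt_of_lt_of_le (Nat.lt_succ_self J)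
      (le_trans (le_max_left _ _) (le_max_left _ _))
    have hrjj : s < φ (ψ jj) + 1 := hrmono hJjj
    set T := (φ (ψ jj) + 1) - s with hT
    have hT0 : 0 < T := Nat.sub_pos_of_lt hrjj
    have hsT : s + T = φ (ψ jj) + 1 := Nat.add_sub_cancel' hrjj.le
    have hjjr : jj ≤ φ (ψ jj) + 1 := hrge jj
    have hms : (m + 1) * s ≤ T := by
      have h1 : (m + 2) * s ≤ jj := le_max_right _ _
      have h2 : (m + 2) * s = (m + 1) * s + s := by ring
      omega
    -- the periodic pseudo-orbit
    set c : ℕ → X := fun n => f^[s + n % T] x₀ with hc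
    have hper : ∀ n, c (n + T) = c n := fun n => by simp [hc, Nat.add_mod_right]
    have hpseudo : ∀ n, dist (f (c n)) (c (n + 1)) < δ := by
      intro n
      have hmod : n % T < T := Nat.mod_lt _ hT0
      have hfc : f (c n) = f^[s + n % T + 1] x₀ := by
        rw [hc]; exact (Function.iterate_succ_apply' f _ x₀).symm
      rcases lt_or_eq_of_le (Nat.succ_le_of_lt hmod) with h | h
      · -- no wrap-around
        have h' : n % T + 1 < T := h
        have hsucc : (n + 1) % T = n % T + 1 := by
          conv_lhs => rw [← Nat.mod_add_div n T]
          rw [show n % T + T * (n / T) + 1 = (n % T + 1) + T * (n / T) by ring,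
            Nat.add_mul_mod_self_left, Nat.mod_eq_of_lt h']
        rw [hfc, hc]
        show dist (f^[s + n % T + 1] x₀) (f^[s + (n + 1) % T] x₀) < δ
        rw [hsucc, ← Nat.add_assoc]
        simpa using hδ
      · -- wrap-around
        have h' : n % T + 1 = T := h
        have hsucc : (n + 1) % T = 0 := by
          conv_lhs => rw [← Nat.mod_add_div n T]
          rw [show n % T + T * (n / T) + 1 = (n % T + 1) + T * (n / T) by ring,
            Nat.add_mul_mod_self_left, h', Nat.mod_self]
        rw [hfc, hc]
        show dist (f^[s + n % T + 1] x₀) (f^[s + (n + 1) % T] x₀) < δ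
        rw [hsucc, Nat.add_zero]
        have h1 : s + n % T + 1 = φ (ψ jj) + 1 := by omega
        rw [h1]
        calc dist (f^[φ (ψ jj) + 1] x₀) (f^[s] x₀)
            ≤ dist (f^[φ (ψ jj) + 1] x₀) a + dist a (f^[s] x₀) := dist_triangle _ _ _
          _ < δ / 2 + δ / 2 := by
              refine add_lt_add (hJ jj (le_of_lt hJjj)) ?_
              rw [dist_comm]; exact hJ J le_rfl
          _ = δ := add_halves δ
    obtain ⟨y, ⟨p, hp0, hpy⟩, hsh⟩ := hshad c T hT0 hpseudo hper
    exact ⟨y, p, s, T, jj, hp0, hT0, hpy,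
      le_trans (le_max_right (J + 1) m) (le_max_left _ _), hsT, hms, hsh⟩
  choose y p s T jj hp hT hpy hjm hsT hms hsh using key
  set ρ : ℕ → ProbabilityMeasure X := fun m => empP f (y m) (p m - 1) with hρ
  have hmem : ∀ m, ρ m ∈ periodicMeasures f := fun m =>
    ⟨y m, p m - 1, by rw [Nat.sub_add_cancel (hp m)]; exact hpy m, rfl⟩
  have htend : Tendsto ρ atTop (𝓝 ν) := by
    rw [ProbabilityMeasure.tendsto_iff_forall_integral_tendsto]
    intro g
    have hg0 := ProbabilityMeasure.tendsto_iff_forall_integral_tendsto.mp hconv g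
    rw [Metric.tendsto_nhds]
    intro η hη
    obtain ⟨ε, hε, hgu⟩ := Metric.uniformContinuous_iff.mp
      (CompactSpace.uniformContinuous_of_continuous g.continuous) (η / 4) (by positivity)
    have hlim : Tendsto (fun m : ℕ => 1 / ((m : ℝ) + 1)) atTop (𝓝 0) :=
      tendsto_one_div_add_atTop_nhds_zero_nat
    have E1 : ∀ᶠ m : ℕ in atTop, 1 / ((m : ℝ) + 1) < ε :=
      hlim.eventually (gt_mem_nhds hε)
    have E2 : ∀ᶠ m : ℕ in atTop, 2 * ‖g‖ * (1 / ((m : ℝ) + 1)) < η / 4 := by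
      have h2 : Tendsto (fun m : ℕ => 2 * ‖g‖ * (1 / ((m : ℝ) + 1))) atTop (𝓝 0) := by
        simpa using hlim.const_mul (2 * ‖g‖)
      exact h2.eventually (gt_mem_nhds (by positivity))
    have hψjj : Tendsto (fun m => ψ (jj m)) atTop atTop :=
      tendsto_atTop_mono (fun m => le_trans (hjm m) hψ.le_apply) tendsto_id
    have E3 : ∀ᶠ m : ℕ in atTop,
        dist (∫ z, g z ∂(empP f x₀ (φ (ψ (jj m))) : Measure X))
          (∫ z, g z ∂(ν : Measure X)) < η / 4 :=
      (Metric.tendsto_nhds.mp (hg0.comp hψjj) (η / 4) (by positivity))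
    filter_upwards [E1, E2, E3] with m hε1 hB hC
    have hP0 : 0 < p m := hp m
    have hT0 : 0 < T m := hT m
    set P := p m with hPdef
    set S := s m with hSdef
    set Tm := T m with hTmdef
    set ym := y m with hymdef
    set SY := ∑ k ∈ Finset.range P, g (f^[k] ym) with hSYdef
    set SC := ∑ k ∈ Finset.range Tm, g (f^[S + k] x₀) with hSCdef
    set SH := ∑ k ∈ Finset.range S, g (f^[k] x₀) with hSHdef
    set L := ∫ z, g z ∂(ν : Measure X) with hLdef
    have hPR : (0 : ℝ) < (P : ℝ) := by exact_mod_cast hP0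
    have hTR : (0 : ℝ) < (Tm : ℝ) := by exact_mod_cast hT0
    have hSR : (0 : ℝ) ≤ (S : ℝ) := by positivity
    have hSTR : (0 : ℝ) < (S : ℝ) + (Tm : ℝ) := by linarith
    -- the integral of g against ρ m
    have e1 : ∫ z, g z ∂(ρ m : Measure X) = SY / (P : ℝ) := by
      have hPP : P - 1 + 1 = P := Nat.succ_pred_eq_of_pos hP0
      show ∫ z, g z ∂(empP f ym (P - 1) : Measure X) = _
      rw [integral_empP, hPP]
    -- spread both averages over a common long time interval
    have hu : ∀ k, g (f^[k + P] ym) = g (f^[k] ym) := fun k => by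
      rw [Function.iterate_add_apply, hpy m]
    have e3 : (∑ k ∈ Finset.range (Tm * P), g (f^[k] ym)) / ((Tm : ℝ) * (P : ℝ))
        = SY / (P : ℝ) := by
      rw [sum_periodic' _ P hu Tm]
      exact mul_div_mul_left _ _ hTR.ne'
    have hv : ∀ k, g (f^[S + (k + Tm) % Tm] x₀) = g (f^[S + k % Tm] x₀) := fun k => by
      rw [Nat.add_mod_right]
    have e4 : (∑ k ∈ Finset.range (Tm * P), g (f^[S + k % Tm] x₀)) / ((Tm : ℝ) * (P : ℝ))
        = SC / (Tm : ℝ) := by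
      rw [show Tm * P = P * Tm from Nat.mul_comm _ _, sum_periodic' _ Tm hv P,
        show ∑ k ∈ Finset.range Tm, g (f^[S + k % Tm] x₀) = SC from
          Finset.sum_congr rfl fun k hk => by rw [Nat.mod_eq_of_lt (Finset.mem_range.mp hk)],
        mul_comm (Tm : ℝ) (P : ℝ)]
      exact mul_div_mul_left _ _ hPR.ne'
    -- shadowing estimate
    have b1 : dist (SY / (P : ℝ)) (SC / (Tm : ℝ)) ≤ η / 4 := by
      rw [← e3, ← e4, Real.dist_eq, div_sub_div_same, ← Finset.sum_sub_distrib, abs_div,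
        abs_of_pos (mul_pos hTR hPR)]
      have hterm : ∀ k ∈ Finset.range (Tm * P),
          |g (f^[k] ym) - g (f^[S + k % Tm] x₀)| ≤ η / 4 := by
        intro k _
        have hd : dist (f^[k] ym) (f^[S + k % Tm] x₀) < ε := lt_trans (hsh m k) hε1
        exact le_of_lt (by rw [← Real.dist_eq]; exact hgu hd)
      have hsum : |∑ k ∈ Finset.range (Tm * P), (g (f^[k] ym) - g (f^[S + k % Tm] x₀))|
          ≤ ((Tm * P : ℕ) : ℝ) * (η / 4) := by
        refine le_trans (Finset.abs_sum_le_sum_abs _ _) ?_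
        calc ∑ k ∈ Finset.range (Tm * P), |g (f^[k] ym) - g (f^[S + k % Tm] x₀)|
            ≤ (Finset.range (Tm * P)).card • (η / 4) := Finset.sum_le_card_nsmul _ _ _ hterm
          _ = ((Tm * P : ℕ) : ℝ) * (η / 4) := by rw [Finset.card_range, nsmul_eq_mul]
      have hcast : ((Tm * P : ℕ) : ℝ) = (Tm : ℝ) * (P : ℝ) := by push_cast; ring
      rw [div_le_iff₀ (mul_pos hTR hPR)]
      calc |∑ k ∈ Finset.range (Tm * P), (g (f^[k] ym) - g (f^[S + k % Tm] x₀))|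
          ≤ ((Tm * P : ℕ) : ℝ) * (η / 4) := hsum
        _ = η / 4 * ((Tm : ℝ) * (P : ℝ)) := by rw [hcast]; ring
    -- truncation estimate
    have hSCb : |SC| ≤ (Tm : ℝ) * ‖g‖ := by
      refine le_trans (Finset.abs_sum_le_sum_abs _ _) ?_
      calc ∑ k ∈ Finset.range Tm, |g (f^[S + k] x₀)|
          ≤ (Finset.range Tm).card • ‖g‖ :=
            Finset.sum_le_card_nsmul _ _ _ fun k _ => g.norm_coe_le_norm _
        _ = (Tm : ℝ) * ‖g‖ := by rw [Finset.card_range, nsmul_eq_mul]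
    have hSHb : |SH| ≤ (S : ℝ) * ‖g‖ := by
      refine le_trans (Finset.abs_sum_le_sum_abs _ _) ?_
      calc ∑ k ∈ Finset.range S, |g (f^[k] x₀)|
          ≤ (Finset.range S).card • ‖g‖ :=
            Finset.sum_le_card_nsmul _ _ _ fun k _ => g.norm_coe_le_norm _
        _ = (S : ℝ) * ‖g‖ := by rw [Finset.card_range, nsmul_eq_mul]
    set κ := 1 / ((m : ℝ) + 1) with hκdef
    have hκ0 : (0 : ℝ) < κ := by positivity
    have hmsR : ((m : ℝ) + 1) * (S : ℝ) ≤ (Tm : ℝ) := by exact_mod_cast hms m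
    have hSκ : (S : ℝ) ≤ κ * ((S : ℝ) + (Tm : ℝ)) := by
      have h1 : ((m : ℝ) + 1) * (S : ℝ) ≤ (S : ℝ) + (Tm : ℝ) := by linarith
      have h2 : (S : ℝ) = κ * (((m : ℝ) + 1) * (S : ℝ)) := by
        rw [hκdef]; field_simp
      calc (S : ℝ) = κ * (((m : ℝ) + 1) * (S : ℝ)) := h2
        _ ≤ κ * ((S : ℝ) + (Tm : ℝ)) := mul_le_mul_of_nonneg_left h1 hκ0.le
    have b2 : dist (SC / (Tm : ℝ)) ((SH + SC) / ((S : ℝ) + (Tm : ℝ))) ≤ 2 * ‖g‖ * κ := by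
      rw [Real.dist_eq, div_sub_div _ _ hTR.ne' hSTR.ne', abs_div,
        abs_of_pos (mul_pos hTR hSTR), div_le_iff₀ (mul_pos hTR hSTR)]
      have hnum : |SC * ((S : ℝ) + (Tm : ℝ)) - (Tm : ℝ) * (SH + SC)|
          ≤ 2 * (S : ℝ) * (Tm : ℝ) * ‖g‖ := by
        have heq : SC * ((S : ℝ) + (Tm : ℝ)) - (Tm : ℝ) * (SH + SC)
            = SC * (S : ℝ) - (Tm : ℝ) * SH := by ring
        rw [heq, sub_eq_add_neg]
        refine le_trans (abs_add_le _ _) ?_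
        rw [abs_neg, abs_mul, abs_mul, abs_of_nonneg hSR, abs_of_nonneg hTR.le]
        nlinarith [norm_nonneg g]
      refine le_trans hnum ?_
      have hstep : 2 * (S : ℝ) * (Tm : ℝ) * ‖g‖
          ≤ 2 * (κ * ((S : ℝ) + (Tm : ℝ))) * (Tm : ℝ) * ‖g‖ := by
        gcongr
      refine le_trans hstep (le_of_eq ?_)
      ring
    -- convergence of the full empirical averages
    have e2 : ∫ z, g z ∂(empP f x₀ (φ (ψ (jj m))) : Measure X)
        = (SH + SC) / ((S : ℝ) + (Tm : ℝ)) := by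
      rw [integral_empP, show φ (ψ (jj m)) + 1 = S + Tm from (hsT m).symm,
        sum_range_add' (fun k => g (f^[k] x₀)) S Tm]
      push_cast
      rfl
    rw [e2] at hC
    have hB' : 2 * ‖g‖ * κ < η / 4 := hB
    have htri := dist_triangle4 (SY / (P : ℝ)) (SC / (Tm : ℝ))
      ((SH + SC) / ((S : ℝ) + (Tm : ℝ))) L
    rw [e1]
    linarith [htri, b1, b2, hB', hC]

  exact mem_closure_of_tendsto htend (Eventually.of_forall hmem)

/-- If `f` has the periodic shadowing property, then every physical-like measure is a
weak* limit of periodic measures. -/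
theorem physicalLike_subset_closure_periodicMeasures
    (f : X → X) (hf : Continuous f) (Leb : Measure X) [IsProbabilityMeasure Leb]
    (hsupp : ∀ U : Set X, IsOpen U → U.Nonempty → 0 < Leb U)
    (hps : PeriodicShadowing f) :
    ∀ μ : ProbabilityMeasure X, PhysicalLike f Leb μ →
      μ ∈ closure (periodicMeasures f) := by
  intro μ hμ
  rw [mem_closure_iff]
  intro V hV hμV
  have hpos := hμ V (hV.mem_nhds hμV)
  have hne : {x | ∃ ν ∈ pOmega f x, ν ∈ V}.Nonempty :=
    MeasureTheory.nonempty_of_measure_ne_zero hpos.ne'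
  obtain ⟨x, ν, hν, hνV⟩ := hne
  exact mem_closure_iff.mp (pOmega_mem_closure f hps x ν hν) V hV hνV
end

section
/- Let f : X → X be a continuous map on a compact metric space X. The collection ICT of internally chain transitive compact invariant subsets of X is closed in the Hausdorff metric: if Λ_n ∈ ICT and Λ_n → Λ in the Hausdorff metric, then Λ is compact, invariant and internally chain transitive. -/
open MeasureTheory Filter Topology Set
open scoped ENNReal NNReal

variable {X : Type*} [MetricSpace X] [CompactSpace X] [MeasurableSpace X] [BorelSpace X]

/- On a compact space `f` is uniformly continuous. If `B` is invariant and internally chain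
transitive and `B`, `Λ` lie within `δ` of each other, moving every point of an `ε`-chain of `B`
to a `δ`-close point of `Λ` gives an `(ε + ε + δ)`-chain of `Λ` as soon as `δ ≤ ε` is a modulus
of uniform continuity of `f` for `ε`. The same displacement shows that `f y`, for `y ∈ Λ`, is a
limit of points of `Λ`. -/

section ChainPerturbation

open Metric

variable {α : Type*} [MetricSpace α] {f : α → α} {A B : Set α} {ε η δ : ℝ}

theorem UniformContinuous.exists_modulus_le (hf : UniformContinuous f) (hε : 0 < ε) :
    ∃ δ > 0, δ ≤ ε ∧ ∀ ⦃x y⦄, dist x y < δ → dist (f x) (f y) < ε := by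
  obtain ⟨δ, hδ, hfδ⟩ := Metric.uniformContinuous_iff.1 hf ε hε
  exact ⟨min δ ε, lt_min hδ hε, min_le_right _ _,
    fun x y hxy => hfδ (hxy.trans_le (min_le_left _ _))⟩

theorem Metric.subset_thickening_of_hausdorffDist_lt (hfin : hausdorffEDist A B ≠ ⊤)
    (h : hausdorffDist A B < δ) : A ⊆ thickening δ B := fun _ hx =>
  mem_thickening_iff.2 (exists_dist_lt_of_hausdorffDist_lt hx h hfin)

theorem Metric.subset_thickening_of_hausdorffDist_lt' (hfin : hausdorffEDist A B ≠ ⊤)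
    (h : hausdorffDist A B < δ) : B ⊆ thickening δ A := fun _ hy => by
  obtain ⟨x, hx, hxy⟩ := exists_dist_lt_of_hausdorffDist_lt' hy h hfin
  exact mem_thickening_iff.2 ⟨x, hx, by rwa [dist_comm]⟩

theorem IsEpsChain.mono {ε' : ℝ} {a b : α} (h : IsEpsChain f ε A a b) (hε : ε ≤ ε') :
    IsEpsChain f ε' A a b := by
  obtain ⟨n, hn, c, hc0, hcn, hcA, hcd⟩ := h
  exact ⟨n, hn, c, hc0, hcn, hcA, fun i hi => (hcd i hi).trans_le hε⟩

theorem IsEpsChain.of_subset_thickening {a b a' b' : α}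
    (hf : ∀ ⦃x y⦄, dist x y < δ → dist (f x) (f y) < ε) (hBA : B ⊆ thickening δ A)
    (hc : IsEpsChain f η B a' b') (ha : a ∈ A) (hb : b ∈ A)
    (haa' : dist a a' < δ) (hbb' : dist b b' < δ) :
    IsEpsChain f (ε + η + δ) A a b := by
  obtain ⟨n, hn, c, rfl, rfl, hcB, hcd⟩ := hc
  have hproj : ∀ x, ∃ y ∈ A, x ∈ B → dist x y < δ := fun x => by
    by_cases hx : x ∈ B
    · obtain ⟨y, hy, hxy⟩ := mem_thickening_iff.1 (hBA hx)
      exact ⟨y, hy, fun _ => hxy⟩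
    · exact ⟨a, ha, fun h => absurd h hx⟩
  choose p hpA hpd using hproj
  set c' : ℕ → α := fun i => if i = 0 then a else if i = n then b else p (c i)
  have hc'A : ∀ i, c' i ∈ A := fun i => by
    simp only [c']
    split_ifs
    exacts [ha, hb, hpA _]
  have hcc' : ∀ i ≤ n, dist (c i) (c' i) < δ := fun i hi => by
    simp only [c']
    split_ifs with h0 hn'
    · subst h0; rwa [dist_comm]
    · subst hn'; rwa [dist_comm]
    · exact hpd _ (hcB i hi)
  refine ⟨n, hn, c', by simp [c'], by simp [c', hn.ne'], fun i _ => hc'A i, fun i hi => ?_⟩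
  calc dist (f (c' i)) (c' (i + 1))
      ≤ dist (f (c' i)) (f (c i)) + dist (f (c i)) (c (i + 1)) + dist (c (i + 1)) (c' (i + 1)) :=
        dist_triangle4 _ _ _ _
    _ < ε + η + δ := by
        gcongr
        exacts [hf (by rw [dist_comm]; exact hcc' i hi.le), hcd i hi, hcc' (i + 1) hi]

theorem image_subset_of_forall_thickening (hA : IsClosed A) (hf : UniformContinuous f)
    (h : ∀ δ > 0, ∃ B, f '' B ⊆ B ∧ A ⊆ thickening δ B ∧ B ⊆ thickening δ A) :
    f '' A ⊆ A := by
  rintro _ ⟨y, hy, rfl⟩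
  rw [← hA.closure_eq, Metric.mem_closure_iff]
  intro ε hε
  obtain ⟨δ, hδ, hδε, hfδ⟩ := hf.exists_modulus_le (half_pos hε)
  obtain ⟨B, hfB, hAB, hBA⟩ := h δ hδ
  obtain ⟨x, hx, hyx⟩ := mem_thickening_iff.1 (hAB hy)
  obtain ⟨z, hz, hfxz⟩ := mem_thickening_iff.1 (hBA (hfB ⟨x, hx, rfl⟩))
  refine ⟨z, hz, ?_⟩
  calc dist (f y) z ≤ dist (f y) (f x) + dist (f x) z := dist_triangle _ _ _
    _ < ε / 2 + δ := add_lt_add (hfδ hyx) hfxz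
    _ ≤ ε := by linarith

theorem InternallyChainTransitive.of_forall_thickening (hf : UniformContinuous f)
    (hne : A.Nonempty) (hA : IsCompact A)
    (h : ∀ δ > 0, ∃ B, InternallyChainTransitive f B ∧ A ⊆ thickening δ B ∧ B ⊆ thickening δ A) :
    InternallyChainTransitive f A := by
  refine ⟨hne, hA, image_subset_of_forall_thickening hA.isClosed hf fun δ hδ => ?_, ?_⟩
  · obtain ⟨B, hB, hAB, hBA⟩ := h δ hδ
    exact ⟨B, hB.2.2.1, hAB, hBA⟩
  intro a ha b hb ε hε
  obtain ⟨δ, hδ, hδε, hfδ⟩ := hf.exists_modulus_le (div_pos hε three_pos)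
  obtain ⟨B, hB, hAB, hBA⟩ := h δ hδ
  obtain ⟨a', ha', haa'⟩ := mem_thickening_iff.1 (hAB ha)
  obtain ⟨b', hb', hbb'⟩ := mem_thickening_iff.1 (hAB hb)
  exact ((hB.2.2.2 a' ha' b' hb' (ε / 3) (by positivity)).of_subset_thickening hfδ hBA ha hb
    haa' hbb').mono (by linarith)

end ChainPerturbation

/-- The collection of internally chain transitive sets is closed in the Hausdorff metric. -/
theorem internallyChainTransitive_closed_hausdorff (f : X → X) (hf : Continuous f)
    (Λs : ℕ → Set X) (hICT : ∀ n, InternallyChainTransitive f (Λs n))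
    (Λ : Set X) (hΛne : Λ.Nonempty) (hΛcl : IsClosed Λ)
    (hH : Tendsto (fun n => Metric.hausdorffDist (Λs n) Λ) atTop (𝓝 0)) :
    InternallyChainTransitive f Λ := by
  refine InternallyChainTransitive.of_forall_thickening
    (CompactSpace.uniformContinuous_of_continuous hf) hΛne hΛcl.isCompact fun δ hδ => ?_
  obtain ⟨n, hn⟩ := (hH.eventually (gt_mem_nhds hδ)).exists
  have hfin : Metric.hausdorffEDist (Λs n) Λ ≠ ⊤ :=
    Metric.hausdorffEDist_ne_top_of_nonempty_of_bounded (hICT n).1 hΛne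
      Metric.isBounded_of_compactSpace Metric.isBounded_of_compactSpace
  exact ⟨Λs n, hICT n, Metric.subset_thickening_of_hausdorffDist_lt' hfin hn,
    Metric.subset_thickening_of_hausdorffDist_lt hfin hn⟩
end
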